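/- arXiv:0807.2500 — 2 statements merged into one kernel-verified Lean document; each statement's English description precedes it below -/
import Mathlib

section
/- For every integer s ≥ 2, the s-fold sumset of the set S = {0,2,8} equals {0,2,4,…,8s} \ {8s−10, 8s−4, 8s−2} (all even numbers from 0 to 8s except 8s−10, 8s−4, 8s−2), and in particular this s-fold sumset has exactly 4s−2 elements. -/
/-!
Writing `T s` for the even numbers in `[0, 8s]` other than `8s - 10`, `8s - 4`, `8s - 2`, one has
`{0, 2, 8} + T s = T (s + 1)` for every `s` (even `s = 0, 1`, where some of the gaps are negative):
shifting by `0`, `2`, `8` never lands on a gap of `T (s + 1)`, and every element of `T (s + 1)` is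
`x`, `x + 2` or `x + 8` for some `x ∈ T s`. Since `T 0 = {0}`, induction gives the `s`-fold sumset.
For `s ≥ 2` the three gaps lie in the range, so `T s` has `(4s + 1) - 3` elements.
-/

open Pointwise

/-- The s-fold sumset of a finite set of integers. -/
def foldSumset (S : Finset ℤ) : ℕ → Finset ℤ
  | 0 => {0}
  | n + 1 => S + foldSumset S n

def evensWithGaps (s : ℕ) : Finset ℤ :=
  ((Finset.range (4 * s + 1)).image (fun i : ℕ => (2 * i : ℤ))) \
    {8 * (s : ℤ) - 10, 8 * (s : ℤ) - 4, 8 * (s : ℤ) - 2}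

theorem mem_evensWithGaps {s : ℕ} {x : ℤ} :
    x ∈ evensWithGaps s ↔
      0 ≤ x ∧ x ≤ 8 * s ∧ 2 ∣ x ∧ x ≠ 8 * s - 10 ∧ x ≠ 8 * s - 4 ∧ x ≠ 8 * s - 2 := by
  simp only [evensWithGaps, Finset.mem_sdiff, Finset.mem_image, Finset.mem_range,
    Finset.mem_insert, Finset.mem_singleton, not_or]
  constructor
  · rintro ⟨⟨i, hi, rfl⟩, hgaps⟩
    omega
  · rintro ⟨hx₀, hx, ⟨k, rfl⟩, hgaps⟩
    exact ⟨⟨k.toNat, by omega, by omega⟩, by omega⟩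

theorem add_evensWithGaps (s : ℕ) :
    ({0, 2, 8} : Finset ℤ) + evensWithGaps s = evensWithGaps (s + 1) := by
  ext x
  simp only [Finset.mem_add, Finset.mem_insert, Finset.mem_singleton, mem_evensWithGaps]
  push_cast
  constructor
  · rintro ⟨a, ha, y, hy, rfl⟩
    omega
  · intro hx
    have shift : ∃ a : ℤ, (a = 0 ∨ a = 2 ∨ a = 8) ∧ 0 ≤ x - a ∧ x - a ≤ 8 * s ∧
        x - a ≠ 8 * s - 10 ∧ x - a ≠ 8 * s - 4 ∧ x - a ≠ 8 * s - 2 := by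
      by_cases htop : x = 8 * s + 8
      · exact ⟨8, by omega⟩
      by_cases hgap : x = 8 * s + 2 ∨ x = 8 * s - 4 ∨ x = 8 * s - 10
      · exact ⟨2, by omega⟩
      · exact ⟨0, by omega⟩
    obtain ⟨a, ha, hy⟩ := shift
    exact ⟨a, ha, x - a, by omega, by ring⟩

theorem foldSumset_zero_two_eight (s : ℕ) : foldSumset {0, 2, 8} s = evensWithGaps s := by
  induction s with
  | zero => decide
  | succ n ih => rw [foldSumset, ih, add_evensWithGaps]

theorem card_evensWithGaps {s : ℕ} (hs : 2 ≤ s) : (evensWithGaps s).card = 4 * s - 2 := by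
  have hgaps : ({8 * (s : ℤ) - 10, 8 * (s : ℤ) - 4, 8 * (s : ℤ) - 2} : Finset ℤ) ⊆
      (Finset.range (4 * s + 1)).image (fun i : ℕ => (2 * i : ℤ)) := by
    simp only [Finset.insert_subset_iff, Finset.singleton_subset_iff, Finset.mem_image,
      Finset.mem_range]
    exact ⟨⟨4 * s - 5, by omega, by omega⟩, ⟨4 * s - 2, by omega, by omega⟩,
      ⟨4 * s - 1, by omega, by omega⟩⟩
  have hthree : ({8 * (s : ℤ) - 10, 8 * (s : ℤ) - 4, 8 * (s : ℤ) - 2} : Finset ℤ).card = 3 := by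
    rw [Finset.card_insert_of_notMem (by simp only [Finset.mem_insert, Finset.mem_singleton]; omega),
      Finset.card_insert_of_notMem (by simp only [Finset.mem_singleton]; omega),
      Finset.card_singleton]
  rw [evensWithGaps, Finset.card_sdiff_of_subset hgaps, hthree,
    Finset.card_image_of_injective _ (fun i j h => by omega), Finset.card_range]
  omega

/-- For s ≥ 2, the s-fold sumset of {0,2,8} is the set of even numbers from 0 to 8s
    except 8s−10, 8s−4, 8s−2; in particular it has 4s−2 elements. -/
theorem foldSumset_028 (s : ℕ) (hs : 2 ≤ s) :
    foldSumset {0, 2, 8} s =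
      ((Finset.range (4 * s + 1)).image (fun i : ℕ => (2 * i : ℤ))) \
        {8 * (s : ℤ) - 10, 8 * (s : ℤ) - 4, 8 * (s : ℤ) - 2} ∧
    (foldSumset {0, 2, 8} s).card = 4 * s - 2 := by
  rw [foldSumset_zero_two_eight]
  exact ⟨rfl, card_evensWithGaps hs⟩
end

section
/- If a Steiner triple system of order v contains a Steiner triple system of order w as a subsystem with w < v, then v ≥ 2w + 1. -/
/-!
Fix a point `x` outside the subsystem `Y`. For `y ∈ Y`, the third point of the block through
`x` and `y` lies outside `Y ∪ {x}`, since a block with two points in `Y` lies in `Y`; and it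
determines `y`, as the block through `x` and it is unique. Hence `Y` injects into
`X \ (Y ∪ {x})`, i.e. `w ≤ v - w - 1`.
-/

open Finset

namespace Finset

variable {α : Type*} {s : Finset α}

theorem exists_mem_ne_ne_of_card_eq_three (hs : #s = 3) (a b : α) :
    ∃ c ∈ s, c ≠ a ∧ c ≠ b := by
  classical
  obtain ⟨x, y, z, hxy, hxz, hyz, rfl⟩ := card_eq_three.1 hs
  simp only [mem_insert, mem_singleton, exists_eq_or_imp, exists_eq_left]
  grind

theorem eq_of_card_eq_three_of_ne (hs : #s = 3) {a b c d : α} (ha : a ∈ s) (hb : b ∈ s)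
    (hc : c ∈ s) (hd : d ∈ s) (hab : a ≠ b) (hca : c ≠ a) (hcb : c ≠ b) (hda : d ≠ a)
    (hdb : d ≠ b) : c = d := by
  classical
  obtain ⟨x, y, z, hxy, hxz, hyz, rfl⟩ := card_eq_three.1 hs
  simp only [mem_insert, mem_singleton] at ha hb hc hd
  grind

end Finset

section SteinerTripleSystem

variable {α : Type*} {X Y : Finset α} {A : Finset (Finset α)}

theorem subset_subsystem_of_two_mem
    (hpair : ∀ x ∈ X, ∀ y ∈ X, x ≠ y → ∃! B, B ∈ A ∧ x ∈ B ∧ y ∈ B)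
    (hYX : Y ⊆ X)
    (hsub : ∀ x ∈ Y, ∀ y ∈ Y, x ≠ y → ∃ B ∈ A, x ∈ B ∧ y ∈ B ∧ B ⊆ Y)
    {B : Finset α} (hB : B ∈ A) {y z : α} (hy : y ∈ Y) (hz : z ∈ Y) (hyz : y ≠ z)
    (hyB : y ∈ B) (hzB : z ∈ B) : B ⊆ Y := by
  obtain ⟨B', hB', hyB', hzB', hB'Y⟩ := hsub y hy z hz hyz
  rwa [(hpair y (hYX hy) z (hYX hz) hyz).unique ⟨hB, hyB, hzB⟩ ⟨hB', hyB', hzB'⟩]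

theorem card_subsystem_le_card_sdiff_insert [DecidableEq α]
    (hblocks : ∀ B ∈ A, B ⊆ X ∧ #B = 3)
    (hpair : ∀ x ∈ X, ∀ y ∈ X, x ≠ y → ∃! B, B ∈ A ∧ x ∈ B ∧ y ∈ B)
    (hYX : Y ⊆ X)
    (hsub : ∀ x ∈ Y, ∀ y ∈ Y, x ≠ y → ∃ B ∈ A, x ∈ B ∧ y ∈ B ∧ B ⊆ Y)
    {x : α} (hxX : x ∈ X) (hxY : x ∉ Y) :
    #Y ≤ #(X \ insert x Y) := by
  refine card_le_card_of_forall_subsingleton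
    (fun y z ↦ ∃ B ∈ A, x ∈ B ∧ y ∈ B ∧ z ∈ B) ?_ ?_
  · intro y hy
    have hxy : x ≠ y := by rintro rfl; exact hxY hy
    obtain ⟨B, ⟨hBA, hxB, hyB⟩, -⟩ := hpair x hxX y (hYX hy) hxy
    obtain ⟨z, hzB, hzx, hzy⟩ := exists_mem_ne_ne_of_card_eq_three (hblocks B hBA).2 x y
    have hzY : z ∉ Y := fun hzY ↦
      hxY (subset_subsystem_of_two_mem hpair hYX hsub hBA hy hzY hzy.symm hyB hzB hxB)
    exact ⟨z, by simp [(hblocks B hBA).1 hzB, hzx, hzY], B, hBA, hxB, hyB, hzB⟩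
  · rintro z hz y ⟨hy, B, hBA, hxB, hyB, hzB⟩ y' ⟨hy', B', hB'A, hxB', hy'B', hzB'⟩
    simp only [mem_sdiff, mem_insert, not_or] at hz
    obtain ⟨hzX, hzx, hzY⟩ := hz
    obtain rfl : B = B' :=
      (hpair x hxX z hzX (Ne.symm hzx)).unique ⟨hBA, hxB, hzB⟩ ⟨hB'A, hxB', hzB'⟩
    have hne : ∀ {u}, u ∈ Y → u ≠ x ∧ u ≠ z := fun hu ↦
      ⟨by rintro rfl; exact hxY hu, by rintro rfl; exact hzY hu⟩
    exact eq_of_card_eq_three_of_ne (hblocks B hBA).2 hxB hzB hyB hy'B' (Ne.symm hzx)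
      (hne hy).1 (hne hy).2 (hne hy').1 (hne hy').2

end SteinerTripleSystem

theorem doyen_wilson_necessity_general {α : Type*}
    (v w : ℕ) (X Y : Finset α) (A : Finset (Finset α))
    (hX : X.card = v) (hblocks : ∀ B ∈ A, B ⊆ X ∧ B.card = 3)
    (hpair : ∀ x ∈ X, ∀ y ∈ X, x ≠ y → ∃! B, B ∈ A ∧ x ∈ B ∧ y ∈ B)
    (hYX : Y ⊆ X) (hY : Y.card = w)
    (hsub : ∀ x ∈ Y, ∀ y ∈ Y, x ≠ y → ∃ B ∈ A, x ∈ B ∧ y ∈ B ∧ B ⊆ Y)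
    (hwv : w < v) :
    v ≥ 2 * w + 1 := by
  classical
  obtain ⟨x, hxX, hxY⟩ : ∃ x ∈ X, x ∉ Y :=
    not_subset.1 fun hXY ↦ by have := card_le_card hXY; omega
  have hcount := card_subsystem_le_card_sdiff_insert hblocks hpair hYX hsub hxX hxY
  rw [card_sdiff_of_subset (insert_subset hxX hYX), card_insert_of_notMem hxY] at hcount
  omega

/-- If an STS(v) contains a proper subsystem STS(w) (w < v), then v ≥ 2w + 1. -/
theorem doyen_wilson_necessity {α : Type*} [DecidableEq α]
    (v w : ℕ) (X Y : Finset α) (A : Finset (Finset α))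
    (hX : X.card = v) (hblocks : ∀ B ∈ A, B ⊆ X ∧ B.card = 3)
    (hpair : ∀ x ∈ X, ∀ y ∈ X, x ≠ y → ∃! B, B ∈ A ∧ x ∈ B ∧ y ∈ B)
    (hYX : Y ⊆ X) (hY : Y.card = w)
    (hsub : ∀ x ∈ Y, ∀ y ∈ Y, x ≠ y → ∃ B ∈ A, x ∈ B ∧ y ∈ B ∧ B ⊆ Y)
    (hwv : w < v) :
    v ≥ 2 * w + 1 :=
  doyen_wilson_necessity_general v w X Y A hX hblocks hpair hYX hY hsub hwv
end
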